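/- arXiv:1710.08854 — 2 statements merged into one kernel-verified Lean document; each statement's English description precedes it below -/
import Mathlib

section
/- Glivenko's theorem (minimal version): if A and all formulas in Γ contain no occurrence of → and no occurrence of ∀, then the following are equivalent: (a) Γ ⊢_NK A; (b) Γ ⊢_NM ¬¬A; (c) Γ, ¬A ⊢_NM ⊥. -/
/-- First-order terms: variables (de Bruijn style indices for bound variables
are merged with free variable indices) and function symbols with arguments. -/
inductive Term where
  | var : ℕ → Term
  | fn : ℕ → (ℕ → Term) → Term

/-- Lift (shift by one) all variables ≥ k. -/
def Term.lift (k : ℕ) : Term → Term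
  | .var n => .var (if n < k then n else n + 1)
  | .fn f a => .fn f (fun i => (a i).lift k)

/-- Capture-avoiding substitution of the term `s` for variable `k` (de Bruijn). -/
def Term.subst (k : ℕ) (s : Term) : Term → Term
  | .var n => if n < k then .var n else if n = k then s else .var (n - 1)
  | .fn f a => .fn f (fun i => Term.subst k s (a i))

/-- Free variables of a term. -/
def Term.fv : Term → Set ℕ
  | .var n => {n}
  | .fn _ a => ⋃ i, (a i).fv

/-- First-order formulas with primitive negation, de Bruijn binders. -/
inductive Formula where
  | pred : ℕ → (ℕ → Term) → Formula
  | bot : Formula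
  | top : Formula
  | neg : Formula → Formula
  | conj : Formula → Formula → Formula
  | disj : Formula → Formula → Formula
  | impl : Formula → Formula → Formula
  | all : Formula → Formula
  | ex : Formula → Formula

def Formula.lift (k : ℕ) : Formula → Formula
  | .pred r a => .pred r (fun i => (a i).lift k)
  | .bot => .bot
  | .top => .top
  | .neg A => .neg (A.lift k)
  | .conj A B => .conj (A.lift k) (B.lift k)
  | .disj A B => .disj (A.lift k) (B.lift k)
  | .impl A B => .impl (A.lift k) (B.lift k)
  | .all A => .all (A.lift (k + 1))
  | .ex A => .ex (A.lift (k + 1))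

/-- Capture-avoiding substitution of term `s` for variable `k` in a formula. -/
def Formula.subst (k : ℕ) (s : Term) : Formula → Formula
  | .pred r a => .pred r (fun i => Term.subst k s (a i))
  | .bot => .bot
  | .top => .top
  | .neg A => .neg (A.subst k s)
  | .conj A B => .conj (A.subst k s) (B.subst k s)
  | .disj A B => .disj (A.subst k s) (B.subst k s)
  | .impl A B => .impl (A.subst k s) (B.subst k s)
  | .all A => .all (A.subst (k + 1) (s.lift 0))
  | .ex A => .ex (A.subst (k + 1) (s.lift 0))

/-- Free variables of a formula. -/
def Formula.fv : Formula → Set ℕ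
  | .pred _ a => ⋃ i, (a i).fv
  | .bot => ∅
  | .top => ∅
  | .neg A => A.fv
  | .conj A B => A.fv ∪ B.fv
  | .disj A B => A.fv ∪ B.fv
  | .impl A B => A.fv ∪ B.fv
  | .all A => {n | n + 1 ∈ A.fv}
  | .ex A => {n | n + 1 ∈ A.fv}

/-- Object-level biconditional, as a defined connective. -/
def Formula.fIff (A B : Formula) : Formula := .conj (.impl A B) (.impl B A)

/-- `A` contains no occurrence of the universal quantifier ∀. -/
def Formula.forallFree : Formula → Prop
  | .pred _ _ => True
  | .bot => True
  | .top => True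
  | .neg A => A.forallFree
  | .conj A B => A.forallFree ∧ B.forallFree
  | .disj A B => A.forallFree ∧ B.forallFree
  | .impl A B => A.forallFree ∧ B.forallFree
  | .all _ => False
  | .ex A => A.forallFree

/-- `A` contains no occurrence of implication →. -/
def Formula.impFree : Formula → Prop
  | .pred _ _ => True
  | .bot => True
  | .top => True
  | .neg A => A.impFree
  | .conj A B => A.impFree ∧ B.impFree
  | .disj A B => A.impFree ∧ B.impFree
  | .impl _ _ => False
  | .all A => A.impFree
  | .ex A => A.impFree

/-- The minimal translation (·)^m. -/
def Formula.mtr : Formula → Formula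
  | .pred r a => .pred r a
  | .bot => .bot
  | .top => .top
  | .neg A => .neg A.mtr
  | .conj A B => .conj A.mtr B.mtr
  | .disj A B => .disj A.mtr B.mtr
  | .impl A B => .disj (.neg A.mtr) B.mtr
  | .all A => .neg (.ex (.neg A.mtr))
  | .ex A => .ex A.mtr

/-- The intuitionistic translation (·)^j. -/
def Formula.jtr : Formula → Formula
  | .pred r a => .pred r a
  | .bot => .bot
  | .top => .top
  | .neg A => .neg A.jtr
  | .conj A B => .conj A.jtr B.jtr
  | .disj A B => .disj A.jtr B.jtr
  | .impl A B => .impl A.jtr B.jtr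
  | .all A => .neg (.ex (.neg A.jtr))
  | .ex A => .ex A.jtr

/-- Negative formulas: built from negated atoms, ⊥, ⊤ using only ¬, ∧, →, ∀. -/
inductive Formula.Negative : Formula → Prop where
  | negAtom : ∀ r a, Formula.Negative (.neg (.pred r a))
  | bot : Formula.Negative .bot
  | top : Formula.Negative .top
  | neg : ∀ {A}, Formula.Negative A → Formula.Negative (.neg A)
  | conj : ∀ {A B}, Formula.Negative A → Formula.Negative B → Formula.Negative (.conj A B)
  | impl : ∀ {A B}, Formula.Negative A → Formula.Negative B → Formula.Negative (.impl A B)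
  | all : ∀ {A}, Formula.Negative A → Formula.Negative (.all A)

/-- Natural deduction derivability; the flags `efq`, `raa` tell whether the
ex falso quodlibet and reductio ad absurdum rules are available.  `Deriv efq raa Γ A`
means `A` is derivable with undischarged assumptions among `Γ`. -/
inductive Deriv (efq raa : Bool) : Set Formula → Formula → Prop where
  | hyp : ∀ {Γ A}, A ∈ Γ → Deriv efq raa Γ A
  | topI : ∀ {Γ}, Deriv efq raa Γ .top
  | negI : ∀ {Γ A}, Deriv efq raa (insert A Γ) .bot → Deriv efq raa Γ (.neg A)
  | negE : ∀ {Γ A}, Deriv efq raa Γ (.neg A) → Deriv efq raa Γ A → Deriv efq raa Γ .bot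
  | conjI : ∀ {Γ A B}, Deriv efq raa Γ A → Deriv efq raa Γ B → Deriv efq raa Γ (.conj A B)
  | conjE1 : ∀ {Γ A B}, Deriv efq raa Γ (.conj A B) → Deriv efq raa Γ A
  | conjE2 : ∀ {Γ A B}, Deriv efq raa Γ (.conj A B) → Deriv efq raa Γ B
  | disjI1 : ∀ {Γ A B}, Deriv efq raa Γ A → Deriv efq raa Γ (.disj A B)
  | disjI2 : ∀ {Γ A B}, Deriv efq raa Γ B → Deriv efq raa Γ (.disj A B)
  | disjE : ∀ {Γ A B C}, Deriv efq raa Γ (.disj A B) → Deriv efq raa (insert A Γ) C →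
      Deriv efq raa (insert B Γ) C → Deriv efq raa Γ C
  | implI : ∀ {Γ A B}, Deriv efq raa (insert A Γ) B → Deriv efq raa Γ (.impl A B)
  | implE : ∀ {Γ A B}, Deriv efq raa Γ (.impl A B) → Deriv efq raa Γ A → Deriv efq raa Γ B
  | allI : ∀ {Γ A}, Deriv efq raa (Formula.lift 0 '' Γ) A → Deriv efq raa Γ (.all A)
  | allE : ∀ {Γ A} (t : Term), Deriv efq raa Γ (.all A) → Deriv efq raa Γ (A.subst 0 t)
  | exI : ∀ {Γ A} (t : Term), Deriv efq raa Γ (A.subst 0 t) → Deriv efq raa Γ (.ex A)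
  | exE : ∀ {Γ A C}, Deriv efq raa Γ (.ex A) →
      Deriv efq raa (insert A (Formula.lift 0 '' Γ)) (C.lift 0) → Deriv efq raa Γ C
  | efqR : ∀ {Γ A}, efq = true → Deriv efq raa Γ .bot → Deriv efq raa Γ A
  | raaR : ∀ {Γ A}, raa = true → Deriv efq raa (insert (.neg A) Γ) .bot → Deriv efq raa Γ A

/-- Minimal natural deduction. -/
def NM : Set Formula → Formula → Prop := Deriv false false
/-- Intuitionistic natural deduction. -/
def NJ : Set Formula → Formula → Prop := Deriv true false
/-- Classical natural deduction (minimal + reductio ad absurdum). -/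
def NK : Set Formula → Formula → Prop := Deriv false true

/-! In minimal logic `¬¬` behaves like a monad, and under it every rule of NK becomes admissible
once formulas are replaced by their minimal translation `(·)^m`: reductio becomes `¬¬⊥ ⊢ ⊥`, and
the rules for `→` and `∀` hold under `¬¬` for their translations `¬A ∨ B` and `¬∃¬A`. Thus
`Γ ⊢_NK A` yields `Γ^m ⊢_NM ¬¬A^m`, which is `Γ ⊢_NM ¬¬A` because `(·)^m` is the identity on
formulas without `→` and `∀`. -/

namespace Deriv

variable {e r : Bool} {Γ Δ : Set Formula} {A B C : Formula}

theorem weaken (h : Deriv e r Γ A) (hs : Γ ⊆ Δ) : Deriv e r Δ A := by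
  induction h generalizing Δ with
  | hyp hA => exact hyp (hs hA)
  | topI => exact topI
  | negI _ ih => exact negI (ih (Set.insert_subset_insert hs))
  | negE _ _ ih₁ ih₂ => exact negE (ih₁ hs) (ih₂ hs)
  | conjI _ _ ih₁ ih₂ => exact conjI (ih₁ hs) (ih₂ hs)
  | conjE1 _ ih => exact conjE1 (ih hs)
  | conjE2 _ ih => exact conjE2 (ih hs)
  | disjI1 _ ih => exact disjI1 (ih hs)
  | disjI2 _ ih => exact disjI2 (ih hs)
  | disjE _ _ _ ih ihA ihB =>
      exact disjE (ih hs) (ihA (Set.insert_subset_insert hs)) (ihB (Set.insert_subset_insert hs))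
  | implI _ ih => exact implI (ih (Set.insert_subset_insert hs))
  | implE _ _ ih₁ ih₂ => exact implE (ih₁ hs) (ih₂ hs)
  | allI _ ih => exact allI (ih (Set.image_mono hs))
  | allE t _ ih => exact allE t (ih hs)
  | exI t _ ih => exact exI t (ih hs)
  | exE _ _ ih₁ ih₂ => exact exE (ih₁ hs) (ih₂ (Set.insert_subset_insert (Set.image_mono hs)))
  | efqR he _ ih => exact efqR he (ih hs)
  | raaR hr _ ih => exact raaR hr (ih (Set.insert_subset_insert hs))

theorem mono_rules {e' r' : Bool} (he : e = true → e' = true) (hr : r = true → r' = true)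
    (h : Deriv e r Γ A) : Deriv e' r' Γ A := by
  induction h with
  | hyp hA => exact hyp hA
  | topI => exact topI
  | negI _ ih => exact negI ih
  | negE _ _ ih₁ ih₂ => exact negE ih₁ ih₂
  | conjI _ _ ih₁ ih₂ => exact conjI ih₁ ih₂
  | conjE1 _ ih => exact conjE1 ih
  | conjE2 _ ih => exact conjE2 ih
  | disjI1 _ ih => exact disjI1 ih
  | disjI2 _ ih => exact disjI2 ih
  | disjE _ _ _ ih ihA ihB => exact disjE ih ihA ihB
  | implI _ ih => exact implI ih
  | implE _ _ ih₁ ih₂ => exact implE ih₁ ih₂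
  | allI _ ih => exact allI ih
  | allE t _ ih => exact allE t ih
  | exI t _ ih => exact exI t ih
  | exE _ _ ih₁ ih₂ => exact exE ih₁ ih₂
  | efqR h _ ih => exact efqR (he h) ih
  | raaR h _ ih => exact raaR (hr h) ih

theorem head : Deriv e r (insert A Γ) A := hyp (Set.mem_insert _ _)

theorem second : Deriv e r (insert A (insert B Γ)) B :=
  hyp (Set.mem_insert_of_mem _ (Set.mem_insert _ _))

theorem weaken_insert (h : Deriv e r Γ A) : Deriv e r (insert B Γ) A :=
  h.weaken (Set.subset_insert _ _)

theorem weaken_insert_insert (h : Deriv e r (insert A Γ) B) :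
    Deriv e r (insert A (insert C Γ)) B :=
  h.weaken (Set.insert_subset_insert (Set.subset_insert _ _))

theorem neg_iff : Deriv e r Γ (.neg A) ↔ Deriv e r (insert A Γ) .bot :=
  ⟨fun h => negE h.weaken_insert head, negI⟩

theorem of_negNeg (hr : r = true) (h : Deriv e r Γ (.neg (.neg A))) : Deriv e r Γ A :=
  raaR hr (neg_iff.mp h)

theorem negNeg_intro (h : Deriv e r Γ A) : Deriv e r Γ (.neg (.neg A)) :=
  negI (negE head h.weaken_insert)

theorem negNeg_bind (h₁ : Deriv e r Γ (.neg (.neg A)))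
    (h₂ : Deriv e r (insert A Γ) (.neg (.neg B))) : Deriv e r Γ (.neg (.neg B)) :=
  negI (negE h₁.weaken_insert (negI (negE h₂.weaken_insert_insert second)))

theorem negNeg_map (h₁ : Deriv e r Γ (.neg (.neg A))) (h₂ : Deriv e r (insert A Γ) B) :
    Deriv e r Γ (.neg (.neg B)) :=
  negNeg_bind h₁ (negNeg_intro h₂)

theorem bot_of_negNeg_bot (h : Deriv e r Γ (.neg (.neg .bot))) : Deriv e r Γ .bot :=
  negE h (negI head)

theorem negNeg_negOr_intro (h : Deriv e r (insert A Γ) (.neg (.neg B))) :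
    Deriv e r Γ (.neg (.neg (.disj (.neg A) B))) := by
  refine negI (negE (negNeg_bind ?_ h.weaken_insert_insert) ?_)
  · exact negI (negE second (disjI1 head))
  · exact negI (negE second (disjI2 head))

theorem negNeg_negOr_elim (h₁ : Deriv e r Γ (.neg (.neg (.disj (.neg A) B))))
    (h₂ : Deriv e r Γ (.neg (.neg A))) : Deriv e r Γ (.neg (.neg B)) :=
  negNeg_bind h₁ <| disjE head
    (negI (negE h₂.weaken_insert.weaken_insert.weaken_insert second))
    (negNeg_intro head)

theorem neg_ex_neg_intro (h : Deriv e r (Formula.lift 0 '' Γ) (.neg (.neg A))) :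
    Deriv e r Γ (.neg (.ex (.neg A))) :=
  negI <| exE (C := .bot) head <|
    negE (h.weaken (Set.image_mono (Set.subset_insert _ _))).weaken_insert head

theorem negNeg_subst_of_neg_ex_neg (t : Term)
    (h : Deriv e r Γ (.neg (.neg (.neg (.ex (.neg A)))))) :
    Deriv e r Γ (.neg (.neg (A.subst 0 t))) :=
  negI (negE h.weaken_insert (negNeg_intro (exI t head)))

theorem negNeg_exE (h₁ : Deriv e r Γ (.neg (.neg (.ex A))))
    (h₂ : Deriv e r (insert A (Formula.lift 0 '' Γ)) ((Formula.neg (.neg C)).lift 0)) :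
    Deriv e r Γ (.neg (.neg C)) :=
  negNeg_bind h₁ <| exE head <|
    h₂.weaken (Set.insert_subset_insert (Set.image_mono (Set.subset_insert _ _)))

end Deriv

namespace Formula

theorem mtr_lift (A : Formula) (k : ℕ) : (A.lift k).mtr = A.mtr.lift k := by
  induction A generalizing k <;> simp [lift, mtr, *]

theorem mtr_subst (A : Formula) (k : ℕ) (s : Term) : (A.subst k s).mtr = A.mtr.subst k s := by
  induction A generalizing k s <;> simp [subst, mtr, *]

theorem mtr_image_lift (Γ : Set Formula) :
    mtr '' (lift 0 '' Γ) = lift 0 '' (mtr '' Γ) := by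
  simp only [Set.image_image, mtr_lift]

theorem mtr_eq_self {A : Formula} (h : A.forallFree ∧ A.impFree) : A.mtr = A := by
  induction A <;> simp_all [forallFree, impFree, mtr]

end Formula

open Formula in
theorem NK.nm_negNeg_mtr {Γ : Set Formula} {A : Formula} (h : NK Γ A) :
    NM (mtr '' Γ) (.neg (.neg A.mtr)) := by
  induction h with
  | hyp hA => exact .negNeg_intro (.hyp ⟨_, hA, rfl⟩)
  | topI => exact .negNeg_intro .topI
  | negI _ ih =>
      rw [Set.image_insert_eq] at ih
      exact .negNeg_intro (.negI (.bot_of_negNeg_bot ih))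
  | negE _ _ ih₁ ih₂ => exact .negNeg_intro (.negE ih₁ ih₂)
  | conjI _ _ ih₁ ih₂ =>
      exact .negNeg_bind ih₁ (.negNeg_map ih₂.weaken_insert (.conjI .second .head))
  | conjE1 _ ih => exact .negNeg_map ih (.conjE1 .head)
  | conjE2 _ ih => exact .negNeg_map ih (.conjE2 .head)
  | disjI1 _ ih => exact .negNeg_map ih (.disjI1 .head)
  | disjI2 _ ih => exact .negNeg_map ih (.disjI2 .head)
  | disjE _ _ _ ih ihA ihB =>
      rw [Set.image_insert_eq] at ihA ihB
      exact .negNeg_bind ih (.disjE .head ihA.weaken_insert_insert ihB.weaken_insert_insert)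
  | implI _ ih =>
      rw [Set.image_insert_eq] at ih
      exact .negNeg_negOr_intro ih
  | implE _ _ ih₁ ih₂ => exact .negNeg_negOr_elim ih₁ ih₂
  | allI _ ih =>
      rw [mtr_image_lift] at ih
      exact .negNeg_intro (.neg_ex_neg_intro ih)
  | allE t _ ih =>
      rw [mtr_subst]
      exact .negNeg_subst_of_neg_ex_neg t ih
  | exI t _ ih =>
      rw [mtr_subst] at ih
      exact .negNeg_map ih (.exI t .head)
  | exE _ _ ih₁ ih₂ =>
      rw [Set.image_insert_eq, mtr_image_lift, mtr_lift] at ih₂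
      exact .negNeg_exE ih₁ ih₂
  | efqR he _ _ => exact absurd he Bool.false_ne_true
  | raaR _ _ ih =>
      rw [Set.image_insert_eq] at ih
      exact .negI (.bot_of_negNeg_bot ih)

/-- Glivenko's theorem, minimal version. -/
theorem glivenko_minimal (Γ : Set Formula) (A : Formula)
    (hA : A.forallFree ∧ A.impFree) (hΓ : ∀ B ∈ Γ, B.forallFree ∧ B.impFree) :
    (NK Γ A ↔ NM Γ (.neg (.neg A))) ∧
    (NK Γ A ↔ NM (insert (.neg A) Γ) .bot) := by
  have hΓ_mtr : Formula.mtr '' Γ = Γ :=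
    (Set.image_congr fun B hB => Formula.mtr_eq_self (hΓ B hB)).trans (Set.image_id Γ)
  have hab : NK Γ A ↔ NM Γ (.neg (.neg A)) := by
    refine ⟨fun h => ?_, fun h => Deriv.of_negNeg rfl (Deriv.mono_rules id (fun _ => rfl) h)⟩
    simpa only [hΓ_mtr, Formula.mtr_eq_self hA] using h.nm_negNeg_mtr
  exact ⟨hab, hab.trans Deriv.neg_iff⟩
end

section
/- Generalized Glivenko theorem via the intuitionistic translation: Γ ⊢_NK A if and only if Γ^j ⊢_NJ ¬¬A^j, where the intuitionistic translation leaves all connectives unchanged except (∀x A)^j = ¬∃x ¬A^j. -/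
/-! Classical rules become intuitionistic once every conclusion is read under `¬¬`: double
negation is a monad over minimal logic, so each rule of NK lifts to a rule between `¬¬`-ed
premises and conclusions.  The exceptions are `→`-introduction, where `¬¬(A → B)` follows from
`A → ¬¬B` only with ex falso, and `∀`-introduction, where `∀x ¬¬A` does not give `¬¬∀x A`
intuitionistically; this is why `∀` is translated as `¬∃¬`, since `¬∃x ¬A` does follow from
`∀x ¬¬A`.  Conversely, NJ ⊆ NK, every formula is classically equivalent to its translation,
and classically `¬¬A` gives `A`. -/

namespace Term

theorem lift_lift {i j : ℕ} (h : i ≤ j) (t : Term) :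
    (t.lift j).lift i = (t.lift i).lift (j + 1) := by
  induction t with
  | var n => grind [Term.lift]
  | fn f a ih => simp only [Term.lift, ih]

theorem lift_subst {j k : ℕ} (h : j ≤ k) (s t : Term) :
    (Term.subst j s t).lift k = Term.subst j (s.lift k) (t.lift (k + 1)) := by
  induction t with
  | var n => grind [Term.lift, Term.subst]
  | fn f a ih => simp only [Term.subst, Term.lift, ih]

theorem subst_var_lift (j : ℕ) (t : Term) : Term.subst j (.var j) (t.lift (j + 1)) = t := by
  induction t with
  | var n => grind [Term.lift, Term.subst]
  | fn f a ih => simp only [Term.lift, Term.subst, ih]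

end Term

namespace Formula

theorem lift_lift {i j : ℕ} (h : i ≤ j) (A : Formula) :
    (A.lift j).lift i = (A.lift i).lift (j + 1) := by
  induction A generalizing i j <;> simp_all [Formula.lift, Term.lift_lift]

theorem lift_subst {j k : ℕ} (h : j ≤ k) (s : Term) (A : Formula) :
    (A.subst j s).lift k = (A.lift (k + 1)).subst j (s.lift k) := by
  induction A generalizing j k s <;>
    simp_all [Formula.lift, Formula.subst, Term.lift_subst, Term.lift_lift]

theorem subst_var_lift (j : ℕ) (A : Formula) : (A.lift (j + 1)).subst j (.var j) = A := by
  induction A generalizing j <;>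
    simp_all [Formula.lift, Formula.subst, Term.subst_var_lift, Term.lift]

theorem jtr_lift (k : ℕ) (A : Formula) : (A.lift k).jtr = A.jtr.lift k := by
  induction A generalizing k <;> simp_all [Formula.lift, Formula.jtr]

theorem jtr_subst (k : ℕ) (s : Term) (A : Formula) : (A.subst k s).jtr = A.jtr.subst k s := by
  induction A generalizing k s <;> simp_all [Formula.subst, Formula.jtr]

theorem image_lift_image_lift (k : ℕ) (Γ : Set Formula) :
    Formula.lift 0 '' (Formula.lift k '' Γ) = Formula.lift (k + 1) '' (Formula.lift 0 '' Γ) := by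
  simp only [Set.image_image, Formula.lift_lift (Nat.zero_le k)]

theorem image_jtr_image_lift (k : ℕ) (Γ : Set Formula) :
    Formula.jtr '' (Formula.lift k '' Γ) = Formula.lift k '' (Formula.jtr '' Γ) := by
  simp only [Set.image_image, Formula.jtr_lift]

end Formula

namespace Deriv

variable {e r : Bool} {Γ Δ : Set Formula} {A B C : Formula}

theorem mono (d : Deriv e r Γ A) (h : Γ ⊆ Δ) : Deriv e r Δ A := by
  induction d generalizing Δ with
  | hyp hA => exact .hyp (h hA)
  | topI => exact .topI
  | negI _ ih => exact .negI (ih (Set.insert_subset_insert h))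
  | negE _ _ ih₁ ih₂ => exact .negE (ih₁ h) (ih₂ h)
  | conjI _ _ ih₁ ih₂ => exact .conjI (ih₁ h) (ih₂ h)
  | conjE1 _ ih => exact .conjE1 (ih h)
  | conjE2 _ ih => exact .conjE2 (ih h)
  | disjI1 _ ih => exact .disjI1 (ih h)
  | disjI2 _ ih => exact .disjI2 (ih h)
  | disjE _ _ _ ih₁ ih₂ ih₃ =>
    exact .disjE (ih₁ h) (ih₂ (Set.insert_subset_insert h)) (ih₃ (Set.insert_subset_insert h))
  | implI _ ih => exact .implI (ih (Set.insert_subset_insert h))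
  | implE _ _ ih₁ ih₂ => exact .implE (ih₁ h) (ih₂ h)
  | allI _ ih => exact .allI (ih (Set.image_mono h))
  | allE t _ ih => exact .allE t (ih h)
  | exI t _ ih => exact .exI t (ih h)
  | exE _ _ ih₁ ih₂ => exact .exE (ih₁ h) (ih₂ (Set.insert_subset_insert (Set.image_mono h)))
  | efqR he _ ih => exact .efqR he (ih h)
  | raaR hr _ ih => exact .raaR hr (ih (Set.insert_subset_insert h))

theorem weaken_s16 (d : Deriv e r Γ A) : Deriv e r (insert B Γ) A := d.mono (Set.subset_insert _ _)

theorem weaken_tail (d : Deriv e r (insert A Γ) C) : Deriv e r (insert A (insert B Γ)) C :=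
  d.mono (Set.insert_subset_insert (Set.subset_insert _ _))

theorem lift (d : Deriv e r Γ A) (k : ℕ) : Deriv e r (Formula.lift k '' Γ) (A.lift k) := by
  induction d generalizing k with
  | hyp hA => exact .hyp (Set.mem_image_of_mem _ hA)
  | topI => exact .topI
  | negI _ ih => exact .negI (by simpa only [Set.image_insert_eq, Formula.lift] using ih k)
  | negE _ _ ih₁ ih₂ => exact .negE (ih₁ k) (ih₂ k)
  | conjI _ _ ih₁ ih₂ => exact .conjI (ih₁ k) (ih₂ k)
  | conjE1 _ ih => exact .conjE1 (ih k)
  | conjE2 _ ih => exact .conjE2 (ih k)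
  | disjI1 _ ih => exact .disjI1 (ih k)
  | disjI2 _ ih => exact .disjI2 (ih k)
  | disjE _ _ _ ih₁ ih₂ ih₃ =>
    exact .disjE (ih₁ k) (by simpa only [Set.image_insert_eq, Formula.lift] using ih₂ k)
      (by simpa only [Set.image_insert_eq, Formula.lift] using ih₃ k)
  | implI _ ih => exact .implI (by simpa only [Set.image_insert_eq, Formula.lift] using ih k)
  | implE _ _ ih₁ ih₂ => exact .implE (ih₁ k) (ih₂ k)
  | allI _ ih => exact .allI (Formula.image_lift_image_lift k _ ▸ ih (k + 1))
  | allE t _ ih =>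
    rw [Formula.lift_subst (Nat.zero_le k)]
    exact .allE (t.lift k) (ih k)
  | exI t _ ih =>
    refine .exI (t.lift k) ?_
    rw [← Formula.lift_subst (Nat.zero_le k)]
    exact ih k
  | exE _ _ ih₁ ih₂ =>
    refine .exE (ih₁ k) ?_
    rw [Formula.lift_lift (Nat.zero_le k), Formula.image_lift_image_lift, ← Set.image_insert_eq]
    exact ih₂ (k + 1)
  | efqR he _ ih => exact .efqR he (ih k)
  | raaR hr _ ih => exact .raaR hr (by simpa only [Set.image_insert_eq, Formula.lift] using ih k)

theorem cut (d : Deriv e r Δ A) (hΔ : ∀ B ∈ Δ, Deriv e r Γ B) : Deriv e r Γ A := by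
  have extend {Γ Δ : Set Formula} {A : Formula} (hΔ : ∀ B ∈ Δ, Deriv e r Γ B) :
      ∀ B ∈ insert A Δ, Deriv e r (insert A Γ) B :=
    Set.forall_mem_insert.2 ⟨head, fun B hB => (hΔ B hB).weaken_s16⟩
  have extend_lift {Γ Δ : Set Formula} (hΔ : ∀ B ∈ Δ, Deriv e r Γ B) :
      ∀ B ∈ Formula.lift 0 '' Δ, Deriv e r (Formula.lift 0 '' Γ) B :=
    Set.forall_mem_image.2 fun B hB => (hΔ B hB).lift 0
  induction d generalizing Γ with
  | hyp hA => exact hΔ _ hA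
  | topI => exact .topI
  | negI _ ih => exact .negI (ih (extend hΔ))
  | negE _ _ ih₁ ih₂ => exact .negE (ih₁ hΔ) (ih₂ hΔ)
  | conjI _ _ ih₁ ih₂ => exact .conjI (ih₁ hΔ) (ih₂ hΔ)
  | conjE1 _ ih => exact .conjE1 (ih hΔ)
  | conjE2 _ ih => exact .conjE2 (ih hΔ)
  | disjI1 _ ih => exact .disjI1 (ih hΔ)
  | disjI2 _ ih => exact .disjI2 (ih hΔ)
  | disjE _ _ _ ih₁ ih₂ ih₃ => exact .disjE (ih₁ hΔ) (ih₂ (extend hΔ)) (ih₃ (extend hΔ))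
  | implI _ ih => exact .implI (ih (extend hΔ))
  | implE _ _ ih₁ ih₂ => exact .implE (ih₁ hΔ) (ih₂ hΔ)
  | allI _ ih => exact .allI (ih (extend_lift hΔ))
  | allE t _ ih => exact .allE t (ih hΔ)
  | exI t _ ih => exact .exI t (ih hΔ)
  | exE _ _ ih₁ ih₂ => exact .exE (ih₁ hΔ) (ih₂ (extend (extend_lift hΔ)))
  | efqR he _ ih => exact .efqR he (ih hΔ)
  | raaR hr _ ih => exact .raaR hr (ih (extend hΔ))

theorem toNK (d : Deriv e r Γ A) : NK Γ A := by
  induction d with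
  | hyp hA => exact .hyp hA
  | topI => exact .topI
  | negI _ ih => exact .negI ih
  | negE _ _ ih₁ ih₂ => exact .negE ih₁ ih₂
  | conjI _ _ ih₁ ih₂ => exact .conjI ih₁ ih₂
  | conjE1 _ ih => exact .conjE1 ih
  | conjE2 _ ih => exact .conjE2 ih
  | disjI1 _ ih => exact .disjI1 ih
  | disjI2 _ ih => exact .disjI2 ih
  | disjE _ _ _ ih₁ ih₂ ih₃ => exact .disjE ih₁ ih₂ ih₃
  | implI _ ih => exact .implI ih
  | implE _ _ ih₁ ih₂ => exact .implE ih₁ ih₂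
  | allI _ ih => exact .allI ih
  | allE t _ ih => exact .allE t ih
  | exI t _ ih => exact .exI t ih
  | exE _ _ ih₁ ih₂ => exact .exE ih₁ ih₂
  | efqR _ _ ih => exact .raaR rfl ih.weaken_s16
  | raaR _ _ ih => exact .raaR rfl ih

theorem dni (d : Deriv e r Γ A) : Deriv e r Γ (.neg (.neg A)) :=
  .negI (.negE head d.weaken_s16)

theorem bot_of_neg_neg_bot (d : Deriv e r Γ (.neg (.neg .bot))) : Deriv e r Γ .bot :=
  .negE d (.negI head)

theorem neg_of_neg_neg_neg (d : Deriv e r Γ (.neg (.neg (.neg A)))) : Deriv e r Γ (.neg A) :=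
  .negI (.negE d.weaken_s16 (dni head))

theorem dn_bind (d : Deriv e r Γ (.neg (.neg A))) (f : Deriv e r (insert A Γ) (.neg (.neg B))) :
    Deriv e r Γ (.neg (.neg B)) :=
  .negI (.negE d.weaken_s16 (.negI (.negE f.weaken_tail head.weaken_s16)))

theorem dn_map (d : Deriv e r Γ (.neg (.neg A)))
    (f : ∀ {Δ}, Deriv e r Δ A → Deriv e r Δ B) : Deriv e r Γ (.neg (.neg B)) :=
  dn_bind d (dni (f head))

theorem dn_map₂ (d₁ : Deriv e r Γ (.neg (.neg A))) (d₂ : Deriv e r Γ (.neg (.neg B)))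
    (f : ∀ {Δ}, Deriv e r Δ A → Deriv e r Δ B → Deriv e r Δ C) : Deriv e r Γ (.neg (.neg C)) :=
  dn_bind d₁ (dn_bind d₂.weaken_s16 (dni (f head.weaken_s16 head)))

theorem exI_var_zero (d : Deriv e r Γ A) : Deriv e r Γ (.ex (A.lift 1)) :=
  .exI (.var 0) ((Formula.subst_var_lift 0 A).symm ▸ d)

theorem allE_var_zero (d : Deriv e r Γ (.all A)) : Deriv e r (Formula.lift 0 '' Γ) A :=
  Formula.subst_var_lift 0 A ▸ .allE (.var 0) (d.lift 0)

theorem neg_ex (d : Deriv e r (Formula.lift 0 '' Γ) (.neg A)) : Deriv e r Γ (.neg (.ex A)) :=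
  .negI (.exE head (C := .bot)
    (.negE (d.mono ((Set.image_mono (Set.subset_insert _ _)).trans (Set.subset_insert _ _))) head))

theorem dn_exE (d : Deriv e r Γ (.neg (.neg (.ex A))))
    (f : Deriv e r (insert A (Formula.lift 0 '' Γ)) (.neg (.neg (C.lift 0)))) :
    Deriv e r Γ (.neg (.neg C)) :=
  .negI (.negE d.weaken_s16 (neg_ex (by
    rw [Set.image_insert_eq]
    exact .negI (.negE f.weaken_tail head.weaken_s16))))

theorem dn_implI (d : Deriv true r (insert A Γ) (.neg (.neg B))) :
    Deriv true r Γ (.neg (.neg (.impl A B))) :=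
  have notB : Deriv true r (insert (.neg (.impl A B)) Γ) (.neg B) :=
    .negI (.negE head.weaken_s16 (.implI head.weaken_s16))
  have notA : Deriv true r (insert (.neg (.impl A B)) Γ) (.neg A) :=
    .negI (.negE d.weaken_tail notB.weaken_s16)
  .negI (.negE head (.implI (.efqR rfl (.negE notA.weaken_s16 head))))

end Deriv

open Deriv in
theorem NK.neg_neg_jtr {Γ : Set Formula} {A : Formula} (d : NK Γ A) :
    NJ (Formula.jtr '' Γ) (.neg (.neg A.jtr)) := by
  induction d with
  | hyp hA => exact dni (.hyp (Set.mem_image_of_mem _ hA))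
  | topI => exact dni .topI
  | negI _ ih =>
    rw [Set.image_insert_eq] at ih
    exact dni (.negI (bot_of_neg_neg_bot ih))
  | negE _ _ ih₁ ih₂ => exact dn_map₂ ih₁ ih₂ .negE
  | conjI _ _ ih₁ ih₂ => exact dn_map₂ ih₁ ih₂ .conjI
  | conjE1 _ ih => exact dn_map ih .conjE1
  | conjE2 _ ih => exact dn_map ih .conjE2
  | disjI1 _ ih => exact dn_map ih .disjI1
  | disjI2 _ ih => exact dn_map ih .disjI2
  | disjE _ _ _ ih₁ ih₂ ih₃ =>
    rw [Set.image_insert_eq] at ih₂ ih₃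
    exact dn_bind ih₁ (.disjE head ih₂.weaken_tail ih₃.weaken_tail)
  | implI _ ih =>
    rw [Set.image_insert_eq] at ih
    exact dn_implI ih
  | implE _ _ ih₁ ih₂ => exact dn_map₂ ih₁ ih₂ .implE
  | allI _ ih =>
    rw [Formula.image_jtr_image_lift] at ih
    exact dni (neg_ex ih)
  | allE t _ ih =>
    rw [Formula.jtr_subst]
    exact .negI (.negE (neg_of_neg_neg_neg ih).weaken_s16 (.exI t head))
  | exI t _ ih =>
    rw [Formula.jtr_subst] at ih
    exact dn_map ih (.exI t)
  | exE _ _ ih₁ ih₂ =>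
    rw [Set.image_insert_eq, Formula.image_jtr_image_lift, Formula.jtr_lift] at ih₂
    exact dn_exE ih₁ ih₂
  | efqR he => cases he
  | raaR _ _ ih =>
    rw [Set.image_insert_eq] at ih
    exact .negI (bot_of_neg_neg_bot ih)

theorem NK.of_neg_neg {Γ : Set Formula} {A : Formula} (d : NK Γ (.neg (.neg A))) : NK Γ A :=
  .raaR rfl (.negE d.weaken_s16 .head)

open Deriv in
theorem NK.jtr_iff {Γ : Set Formula} {A : Formula} : NK Γ A.jtr ↔ NK Γ A := by
  induction A generalizing Γ with
  | pred | bot | top => rfl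
  | neg A ih =>
    exact ⟨fun d => .negI (.negE d.weaken_s16 (ih.2 head)),
      fun d => .negI (.negE d.weaken_s16 (ih.1 head))⟩
  | conj A B ihA ihB =>
    exact ⟨fun d => .conjI (ihA.1 d.conjE1) (ihB.1 d.conjE2),
      fun d => .conjI (ihA.2 d.conjE1) (ihB.2 d.conjE2)⟩
  | disj A B ihA ihB =>
    exact ⟨fun d => .disjE d (.disjI1 (ihA.1 head)) (.disjI2 (ihB.1 head)),
      fun d => .disjE d (.disjI1 (ihA.2 head)) (.disjI2 (ihB.2 head))⟩
  | impl A B ihA ihB =>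
    exact ⟨fun d => .implI (ihB.1 (.implE d.weaken_s16 (ihA.2 head))),
      fun d => .implI (ihB.2 (.implE d.weaken_s16 (ihA.1 head)))⟩
  | all A ih =>
    constructor
    · intro d
      refine .allI (.raaR rfl (.negE (d.lift 0).weaken_s16 (exI_var_zero ?_)))
      exact .negI (.negE head.weaken_s16 (ih.1 head))
    · intro d
      exact .negI (.exE head (C := .bot) (.negE head (ih.2 (allE_var_zero d.weaken_s16).weaken_s16)))
  | ex A ih =>
    exact ⟨fun d => .exE d (exI_var_zero (ih.1 head)),
      fun d => .exE d (exI_var_zero (ih.2 head))⟩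

/-- Generalized Glivenko theorem via the intuitionistic translation. -/
theorem generalized_glivenko_intuitionistic (Γ : Set Formula) (A : Formula) :
    NK Γ A ↔ NJ (Formula.jtr '' Γ) (.neg (.neg A.jtr)) := by
  refine ⟨NK.neg_neg_jtr, fun d => ?_⟩
  have hΓ : ∀ B ∈ Formula.jtr '' Γ, NK Γ B := by
    rintro _ ⟨B, hB, rfl⟩
    exact NK.jtr_iff.2 (.hyp hB)
  exact NK.of_neg_neg (NK.jtr_iff (A := .neg (.neg A)).1 (d.toNK.cut hΓ))
end
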